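/- arXiv:1109.5494 — 2 statements merged into one kernel-verified Lean document; each statement's English description precedes it below -/
import Mathlib

section
/- With P the 2n×2n matrix of the previous statement, the maximum absolute row sum satisfies max_k Σ_{l=0}^{2n−1} |P(k,l)| ≤ C·log n for some absolute constant C and all n ≥ 2. -/
open Matrix Complex Real

/-- The `2n`-point discrete Fourier transform matrix. -/
noncomputable def dftU (n : ℕ) : Matrix (Fin (2 * n)) (Fin (2 * n)) ℂ :=
  fun j k => ((1 / Real.sqrt (2 * n) : ℝ) : ℂ) *
    Complex.exp (2 * Real.pi * Complex.I * (j : ℕ) * (k : ℕ) / (2 * n))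

/-- The diagonal projection onto the first `n` coordinates. -/
def Qproj (n : ℕ) : Matrix (Fin (2 * n)) (Fin (2 * n)) ℂ :=
  Matrix.diagonal (fun i => if (i : ℕ) < n then (1 : ℂ) else 0)

/-- `P = U* Q U`. -/
noncomputable def Pmat (n : ℕ) : Matrix (Fin (2 * n)) (Fin (2 * n)) ℂ :=
  (dftU n)ᴴ * Qproj n * dftU n

/-! Writing `ζ = exp(πi/n)`, a primitive `2n`-th root of unity, the entry `P(k, k + d)` is
`(2n)⁻¹ ∑_{m<n} ζ^{dm}`. For `d ≠ 0` this geometric sum is at most `2 / |ζ^d - 1|`, and the chord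
bound `|ζ^d - 1| = 2 sin(πd/2n) ≥ d(2n - d)/n²` (from `sin x ≥ 2x(π - x)/π²` on `[0, π]`) gives
`|P(k, k + d)| ≤ (1/d + 1/(2n - d))/2`. Summing over `d`, every row sum is at most
`1/2 + H_{2n-1} = O(log n)`. -/

open Finset

lemma norm_geom_sum_le_of_norm_eq_one {K : Type*} [NormedDivisionRing K] {z : K} (hz : ‖z‖ = 1)
    (hz1 : z ≠ 1) (N : ℕ) : ‖∑ m ∈ range N, z ^ m‖ ≤ 2 / ‖z - 1‖ := by
  rw [geom_sum_eq hz1, norm_div]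
  gcongr
  calc ‖z ^ N - 1‖ ≤ ‖z ^ N‖ + ‖(1 : K)‖ := norm_sub_le _ _
    _ = 2 := by rw [norm_pow, hz, one_pow, norm_one]; norm_num

lemma mul_pi_sub_le_sin {x : ℝ} (hx₀ : 0 ≤ x) (hxπ : x ≤ π) :
    2 / π ^ 2 * (x * (π - x)) ≤ Real.sin x := by
  rcases le_total x (π / 2) with h | h
  · calc 2 / π ^ 2 * (x * (π - x)) ≤ 2 / π ^ 2 * (x * π) := by gcongr; linarith
      _ = 2 / π * x := by field_simp
      _ ≤ Real.sin x := Real.mul_le_sin hx₀ h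
  · calc 2 / π ^ 2 * (x * (π - x)) ≤ 2 / π ^ 2 * (π * (π - x)) := by gcongr
      _ = 2 / π * (π - x) := by field_simp
      _ ≤ Real.sin (π - x) := Real.mul_le_sin (by linarith) (by linarith)
      _ = Real.sin x := Real.sin_pi_sub x

lemma mul_two_pi_sub_le_norm_exp_I_mul_sub_one {θ : ℝ} (hθ₀ : 0 ≤ θ) (hθ : θ ≤ 2 * π) :
    θ * (2 * π - θ) / π ^ 2 ≤ ‖Complex.exp (I * θ) - 1‖ := by
  rw [Complex.norm_exp_I_mul_ofReal_sub_one]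
  calc θ * (2 * π - θ) / π ^ 2 = 2 * (2 / π ^ 2 * (θ / 2 * (π - θ / 2))) := by field_simp
    _ ≤ 2 * Real.sin (θ / 2) := by gcongr; exact mul_pi_sub_le_sin (by linarith) (by linarith)
    _ ≤ ‖2 * Real.sin (θ / 2)‖ := le_norm_self _

lemma sum_range_inv_add_inv_reflect (N : ℕ) :
    ∑ i ∈ range N, (((i + 1 : ℕ) : ℝ)⁻¹ + ((N - i : ℕ) : ℝ)⁻¹) = 2 * harmonic N := by
  have hreflect :
      ∑ i ∈ range N, ((N - i : ℕ) : ℝ)⁻¹ = ∑ i ∈ range N, ((i + 1 : ℕ) : ℝ)⁻¹ := by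
    rw [← sum_range_reflect]
    refine sum_congr rfl fun i hi => ?_
    rw [mem_range] at hi
    congr 3
    omega
  rw [sum_add_distrib, hreflect, harmonic]
  push_cast
  ring

noncomputable def dftRoot (n : ℕ) : ℂ := Complex.exp (2 * π * I / (2 * n : ℕ))

lemma isPrimitiveRoot_dftRoot {n : ℕ} (hn : n ≠ 0) : IsPrimitiveRoot (dftRoot n) (2 * n) :=
  Complex.isPrimitiveRoot_exp _ (by omega)

lemma dftRoot_pow (n d : ℕ) : dftRoot n ^ d = Complex.exp (I * (π * d / n : ℝ)) := by
  rw [dftRoot, ← Complex.exp_nat_mul]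
  congr 1
  push_cast
  rcases eq_or_ne n 0 with rfl | hn
  · simp
  · field_simp

lemma dftU_apply (n : ℕ) (j k : Fin (2 * n)) :
    dftU n j k = ((Real.sqrt (2 * n))⁻¹ : ℝ) * (dftRoot n ^ (k : ℕ)) ^ (j : ℕ) := by
  rw [dftU, dftRoot, one_div, ← pow_mul, ← Complex.exp_nat_mul]
  congr 2
  push_cast
  ring

lemma star_dftU_mul_dftU_add {n : ℕ} (hn : n ≠ 0) (m k d : Fin (2 * n)) :
    star (dftU n m k) * dftU n m (k + d) = (2 * n : ℂ)⁻¹ * (dftRoot n ^ (d : ℕ)) ^ (m : ℕ) := by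
  have hζ := isPrimitiveRoot_dftRoot hn
  rw [dftU_apply, dftU_apply, Fin.val_add, ← pow_eq_pow_mod _ hζ.pow_eq_one, pow_add, star_mul',
    star_pow, Complex.star_def, Complex.conj_ofReal]
  set c : ℝ := (Real.sqrt (2 * n))⁻¹
  set w := dftRoot n ^ (k : ℕ)
  have hc : c * c = (2 * n : ℝ)⁻¹ := by rw [← mul_inv, Real.mul_self_sqrt (by positivity)]
  have hw : starRingEnd ℂ w * w = 1 := by
    rw [Complex.conj_mul', norm_pow, hζ.norm'_eq_one (by omega), one_pow, Complex.ofReal_one,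
      one_pow]
  calc _ = ((c * c : ℝ) : ℂ) * (starRingEnd ℂ w * w) ^ (m : ℕ) *
        (dftRoot n ^ (d : ℕ)) ^ (m : ℕ) := by push_cast; ring
    _ = _ := by rw [hc, hw, one_pow, mul_one]; push_cast; rfl

lemma Pmat_apply_add {n : ℕ} (hn : n ≠ 0) (k d : Fin (2 * n)) :
    Pmat n k (k + d) = (2 * n : ℂ)⁻¹ * ∑ m ∈ range n, (dftRoot n ^ (d : ℕ)) ^ m := by
  have hterm : ∀ m : Fin (2 * n), (dftU n)ᴴ k m * (Qproj n * dftU n) m (k + d) =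
      if (m : ℕ) < n then (2 * n : ℂ)⁻¹ * (dftRoot n ^ (d : ℕ)) ^ (m : ℕ) else 0 := by
    intro m
    rw [Qproj, Matrix.diagonal_mul, Matrix.conjTranspose_apply, ← star_dftU_mul_dftU_add hn]
    split_ifs <;> ring
  have hfilter : (range (2 * n)).filter (· < n) = range n := by
    ext m; simp only [mem_filter, mem_range]; omega
  rw [Pmat, Matrix.mul_assoc, Matrix.mul_apply, sum_congr rfl fun m _ => hterm m,
    Fin.sum_univ_eq_sum_range (fun m => if m < n then (2 * n : ℂ)⁻¹ * (dftRoot n ^ (d : ℕ)) ^ m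
      else 0), ← sum_filter, hfilter, mul_sum]

lemma norm_Pmat_apply_self {n : ℕ} (hn : n ≠ 0) (k : Fin (2 * n)) : ‖Pmat n k k‖ = 1 / 2 := by
  have : NeZero (2 * n) := ⟨by omega⟩
  have h := Pmat_apply_add hn k 0
  rw [add_zero] at h
  simp only [Fin.val_zero, pow_zero, one_pow, sum_const, card_range, nsmul_one] at h
  rw [h, show (2 * n : ℂ)⁻¹ * n = (1 / 2 : ℝ) by push_cast; field_simp, Complex.norm_real]
  norm_num

lemma norm_Pmat_apply_add_le {n : ℕ} (hn : n ≠ 0) (k d : Fin (2 * n)) (hd : (d : ℕ) ≠ 0) :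
    ‖Pmat n k (k + d)‖ ≤ ((d : ℝ)⁻¹ + (2 * n - d : ℝ)⁻¹) / 2 := by
  have hd₀ : (0 : ℝ) < d := by positivity
  have hd₁ : (d : ℝ) < 2 * n := by exact_mod_cast d.2
  have hn₀ : (0 : ℝ) < n := by positivity
  rw [Pmat_apply_add hn, dftRoot_pow]
  set w := Complex.exp (I * (π * d / n : ℝ))
  have hchord : (d * (2 * n - d) / n ^ 2 : ℝ) ≤ ‖w - 1‖ := by
    convert mul_two_pi_sub_le_norm_exp_I_mul_sub_one (θ := π * d / n) (by positivity)
      (by rw [div_le_iff₀ hn₀]; nlinarith [pi_pos]) using 1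
    field_simp
  have hpos : (0 : ℝ) < d * (2 * n - d) / n ^ 2 :=
    div_pos (mul_pos hd₀ (by linarith)) (by positivity)
  have hw1 : w ≠ 1 := by
    rintro h
    rw [h, sub_self, norm_zero] at hchord
    linarith
  rw [norm_mul, norm_inv, show ‖(2 * n : ℂ)‖ = 2 * n by simp]
  calc (2 * n : ℝ)⁻¹ * ‖∑ m ∈ range n, w ^ m‖
      ≤ (2 * n : ℝ)⁻¹ * (2 / (d * (2 * n - d) / n ^ 2)) := by
        gcongr
        exact (norm_geom_sum_le_of_norm_eq_one (Complex.norm_exp_I_mul_ofReal _) hw1 n).trans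
          (by gcongr)
    _ = ((d : ℝ)⁻¹ + (2 * n - d : ℝ)⁻¹) / 2 := by
        have : (2 * n - d : ℝ) ≠ 0 := by linarith
        field_simp
        ring

lemma sum_norm_Pmat_row_le {n : ℕ} (hn : n ≠ 0) (k : Fin (2 * n)) :
    ∑ l, ‖Pmat n k l‖ ≤ 1 / 2 + harmonic (2 * n - 1) := by
  have : NeZero (2 * n) := ⟨by omega⟩
  set g : ℕ → ℝ := fun d => if d = 0 then 1 / 2 else ((d : ℝ)⁻¹ + (2 * n - d : ℝ)⁻¹) / 2
  have hbound : ∀ d : Fin (2 * n), ‖Pmat n k (k + d)‖ ≤ g d := by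
    intro d
    by_cases hd : (d : ℕ) = 0
    · rw [show g d = 1 / 2 from if_pos hd, show d = 0 from Fin.ext hd, add_zero,
        norm_Pmat_apply_self hn]
    · simpa only [g, if_neg hd] using norm_Pmat_apply_add_le hn k d hd
  obtain ⟨N, hN⟩ : ∃ N, 2 * n = N + 1 := ⟨2 * n - 1, by omega⟩
  have hg : ∀ i ∈ range N, g (i + 1) = (((i + 1 : ℕ) : ℝ)⁻¹ + ((N - i : ℕ) : ℝ)⁻¹) / 2 := by
    intro i hi
    have h2n : (2 * n : ℝ) = N + 1 := by exact_mod_cast hN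
    rw [mem_range] at hi
    simp only [g, if_neg (Nat.succ_ne_zero i), h2n, Nat.cast_sub hi.le]
    push_cast
    ring_nf
  calc ∑ l, ‖Pmat n k l‖ = ∑ d, ‖Pmat n k (k + d)‖ :=
        (Fintype.sum_equiv (Equiv.addLeft k) _ _ fun _ => rfl).symm
    _ ≤ ∑ d : Fin (2 * n), g d := sum_le_sum fun d _ => hbound d
    _ = ∑ d ∈ range (N + 1), g d := by rw [Fin.sum_univ_eq_sum_range g, hN]
    _ = 1 / 2 + harmonic (2 * n - 1) := by
        rw [sum_range_succ', sum_congr rfl hg, ← sum_div, sum_range_inv_add_inv_reflect,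
          show 2 * n - 1 = N by omega, show g 0 = 1 / 2 from if_pos rfl]
        ring


/-- The maximum absolute row sum of `P` is `O(log n)`: there is an absolute constant `C`
with `max_k ∑_l |P(k,l)| ≤ C log n` for all `n ≥ 2`. -/
theorem Pmat_row_sum_le_log :
    ∃ C : ℝ, ∀ n : ℕ, 2 ≤ n → ∀ k : Fin (2 * n),
      ∑ l : Fin (2 * n), ‖Pmat n k l‖ ≤ C * Real.log n := by
  refine ⟨5, fun n hn k => ?_⟩
  have hn₀ : (0 : ℝ) < n := by positivity
  have hlog_two_le : Real.log 2 ≤ Real.log n := Real.log_le_log two_pos (by exact_mod_cast hn)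
  have hlog_le : Real.log (2 * n - 1 : ℕ) ≤ Real.log 2 + Real.log n := by
    rw [← Real.log_mul two_ne_zero hn₀.ne']
    apply Real.log_le_log (Nat.cast_pos.2 (by omega))
    rw [Nat.cast_sub (by omega)]
    push_cast
    linarith
  calc ∑ l, ‖Pmat n k l‖ ≤ 1 / 2 + harmonic (2 * n - 1) := sum_norm_Pmat_row_le (by omega) k
    _ ≤ 1 / 2 + (1 + Real.log (2 * n - 1 : ℕ)) := by gcongr; exact harmonic_le_one_add_log _
    _ ≤ 5 * Real.log n := by linarith [Real.log_two_gt_d9]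
end

section
/- Gaussian case of the key block computation: if G_0,…,G_n are i.i.d. standard Gaussians and d_j(G) = (2n)^{-1/2}[√2 G_0 + (−1)^j √2 G_n + 2Σ_{k=1}^{n−1} G_k cos(2πjk/(2n))] for 0 ≤ j < 2n, then the random variables d_1(G), …, d_{n−1}(G) are i.i.d. standard Gaussians, and d_0(G), d_n(G) are independent Gaussians with variance 2, independent of the others. -/
/-!
The vector `d = A G` is the image of the standard Gaussian vector `(G_0, …, G_n)` under the
discrete cosine matrix `A`, so it is jointly Gaussian and centred with covariance `A Aᵀ`, and
uncorrelated jointly Gaussian variables are independent. The rows of `A` are orthogonal: the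
squared weights `1, 2, …, 2, 1` of `k = 0, …, n` fold the sum over all `2n`-th roots of unity,
`∑_{k < 2n} cos (2πjk/2n) cos (2πlk/2n) = n (δ_{jl} + [2n ∣ j + l])`, onto `0 ≤ k ≤ n`.
-/

open MeasureTheory ProbabilityTheory Real Finset Matrix
open scoped NNReal

namespace ProbabilityTheory

variable {Ω ι κ : Type*} [MeasurableSpace Ω] {μ : Measure Ω}

theorem hasLaw_of_map_eq {E : Type*} [MeasurableSpace E] {X : Ω → E} {ν : Measure E} [NeZero ν]
    (h : μ.map X = ν) : HasLaw X ν μ :=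
  ⟨.of_map_ne_zero (h ▸ NeZero.ne ν), h⟩

theorem iIndepFun.covariance_fun_sum_mul_fun_sum_mul [Fintype ι]
    {X : ι → Ω → ℝ} (hX : iIndepFun X μ) (h2 : ∀ i, MemLp (X i) 2 μ) (a b : ι → ℝ) :
    cov[fun ω => ∑ i, a i * X i ω, fun ω => ∑ i, b i * X i ω; μ] =
      ∑ i, a i * b i * Var[X i; μ] := by
  have := hX.isProbabilityMeasure
  rw [covariance_fun_sum_fun_sum (fun i => (h2 i).const_mul _) (fun i => (h2 i).const_mul _)]
  refine sum_congr rfl fun i _ => ?_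
  have hoff (k : ι) (hki : k ≠ i) : cov[fun ω => a i * X i ω, fun ω => b k * X k ω; μ] = 0 := by
    rw [covariance_const_mul_left, covariance_const_mul_right,
      (hX.indepFun hki.symm).covariance_eq_zero (h2 i) (h2 k), mul_zero, mul_zero]
  rw [sum_eq_single i (fun k _ => hoff k) (by simp), covariance_const_mul_left,
    covariance_const_mul_right, covariance_self (h2 i).aemeasurable, mul_assoc]

theorem iIndepFun.mulVec_of_mul_transpose_eq_diagonal
    [Fintype ι] [Fintype κ] [DecidableEq κ]
    {X : ι → Ω → ℝ} (hX : iIndepFun X μ) (hlaw : ∀ i, μ.map (X i) = gaussianReal 0 1)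
    {A : Matrix κ ι ℝ} {σ : κ → ℝ≥0} (hA : A * Aᵀ = diagonal fun j => (σ j : ℝ)) :
    iIndepFun (fun j ω => (A *ᵥ fun i => X i ω) j) μ ∧
      ∀ j, μ.map (fun ω => (A *ᵥ fun i => X i ω) j) = gaussianReal 0 (σ j) := by
  have hXlaw i : HasLaw (X i) (gaussianReal 0 1) μ := hasLaw_of_map_eq (hlaw i)
  have hXgauss i : HasGaussianLaw (X i) μ := (hXlaw i).hasGaussianLaw
  have hY : HasGaussianLaw (fun ω => A *ᵥ fun i => X i ω) μ :=
    (hX.hasGaussianLaw hXgauss).map_fun (mulVecLin A).toContinuousLinearMap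
  have hmean j : μ[fun ω => (A *ᵥ fun i => X i ω) j] = 0 := by
    simp only [mulVec, dotProduct]
    rw [integral_finsetSum _ fun i _ => (hXgauss i).integrable.const_mul _]
    simp [integral_const_mul, (hXlaw _).integral_eq, integral_id_gaussianReal]
  have hcov j l : cov[fun ω => (A *ᵥ fun i => X i ω) j, fun ω => (A *ᵥ fun i => X i ω) l; μ] =
      (A * Aᵀ) j l := by
    simp only [mulVec, dotProduct, mul_apply, transpose_apply]
    rw [hX.covariance_fun_sum_mul_fun_sum_mul fun i => (hXgauss i).memLp_two]
    simp [(hXlaw _).variance_eq, variance_id_gaussianReal]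
  refine ⟨hY.iIndepFun_of_covariance_eq_zero fun j l hjl => ?_, fun j => ?_⟩
  · rw [hcov, hA, diagonal_apply_ne _ hjl]
  · rw [(hY.eval j).map_eq_gaussianReal, hmean, ← covariance_self (hY.eval j).aemeasurable,
      hcov, hA, diagonal_apply_eq, Real.toNNReal_coe]

end ProbabilityTheory

theorem sum_range_cos_two_pi_int_mul_div {N : ℕ} (hN : N ≠ 0) (m : ℤ) :
    ∑ k ∈ range N, cos (2 * π * m * k / N) = if (N : ℤ) ∣ m then (N : ℝ) else 0 := by
  split_ifs with hdvd
  · obtain ⟨c, rfl⟩ := hdvd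
    have hterm : ∀ k : ℕ, cos (2 * π * ((N * c : ℤ) : ℝ) * k / N) = 1 := fun k => by
      rw [show 2 * π * ((N * c : ℤ) : ℝ) * k / N = ((c * k : ℤ) : ℝ) * (2 * π) by
        push_cast; field_simp]
      exact cos_int_mul_two_pi _
    rw [sum_congr rfl fun k _ => hterm k]
    simp
  · set ζ : ℂ := Complex.exp (2 * π * m / N * Complex.I)
    have hζ1 : ζ ≠ 1 := by
      rw [Ne, Complex.exp_eq_one_iff]
      rintro ⟨t, ht⟩
      have : (2 * π * m / N : ℂ) = t * (2 * π) := by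
        apply mul_right_cancel₀ Complex.I_ne_zero; rw [ht]; ring
      field_simp at this
      exact hdvd ⟨t, by exact_mod_cast this⟩
    have hζN : ζ ^ N = 1 := by
      rw [← Complex.exp_nat_mul, Complex.exp_eq_one_iff]
      exact ⟨m, by field_simp⟩
    have hgeom : ∑ k ∈ range N, ζ ^ k = 0 := by
      rw [geom_sum_eq hζ1, hζN, sub_self, zero_div]
    rw [show (0 : ℝ) = (∑ k ∈ range N, ζ ^ k).re by rw [hgeom, Complex.zero_re],
      Complex.re_sum]
    refine sum_congr rfl fun k _ => ?_
    rw [← Complex.exp_nat_mul, ← Complex.exp_ofReal_mul_I_re]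
    push_cast; ring_nf

theorem sum_range_succ_eq_add_sum_Icc {M : Type*} [AddCommMonoid M] {n : ℕ} (hn : 1 ≤ n)
    (f : ℕ → M) : ∑ k ∈ range (n + 1), f k = f 0 + f n + ∑ k ∈ Icc 1 (n - 1), f k := by
  rw [show range (n + 1) = insert 0 (insert n (Icc 1 (n - 1))) by ext; simp; omega,
    sum_insert (by simp; omega), sum_insert (by simp; omega), add_assoc]

theorem sum_range_two_mul_of_symm {n : ℕ} (hn : 1 ≤ n) (g : ℕ → ℝ)
    (hg : ∀ k ≤ n, g (n + k) = g (n - k)) :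
    ∑ k ∈ range (2 * n), g k = g 0 + g n + 2 * ∑ k ∈ Icc 1 (n - 1), g k := by
  have hreflect : ∑ k ∈ range n, g (n + k) = ∑ k ∈ range n, g (k + 1) := by
    rw [← sum_range_reflect (fun k => g (k + 1))]
    refine sum_congr rfl fun k hk => ?_
    rw [mem_range] at hk
    rw [hg k hk.le, show n - 1 - k + 1 = n - k by omega]
  rw [two_mul, sum_range_add, hreflect]
  linarith [sum_range_succ g n, sum_range_succ' g n, sum_range_succ_eq_add_sum_Icc hn g]

theorem cos_two_pi_int_mul_div_reflect {n : ℕ} (m : ℤ) {k : ℕ} (hk : k ≤ n) :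
    cos (2 * π * m * (n + k : ℕ) / (2 * n)) = cos (2 * π * m * (n - k : ℕ) / (2 * n)) := by
  rcases eq_or_ne n 0 with rfl | hn
  · obtain rfl : k = 0 := by omega
    rfl
  have hsplit : ∀ s : ℝ, 2 * π * m * (n + s) / (2 * n) = m * π + s * (2 * π * m / (2 * n)) :=
    fun s => by field_simp
  rw [Nat.cast_sub hk, Nat.cast_add, sub_eq_add_neg, hsplit, hsplit, cos_add, cos_add,
    sin_int_mul_pi]
  simp

noncomputable def dctCoeff (n j k : ℕ) : ℝ :=
  (if k = 0 ∨ k = n then √2 else 2) / √(2 * n) * cos (2 * π * j * k / (2 * n))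

theorem dctCoeff_mul_dctCoeff (n j l k : ℕ) :
    dctCoeff n j k * dctCoeff n l k = (if k = 0 ∨ k = n then 1 else 2) / (2 * n) *
      (cos (2 * π * ((j + l : ℤ) : ℝ) * k / (2 * n)) +
        cos (2 * π * ((j - l : ℤ) : ℝ) * k / (2 * n))) := by
  have hprod : cos (2 * π * ((j + l : ℤ) : ℝ) * k / (2 * n)) +
      cos (2 * π * ((j - l : ℤ) : ℝ) * k / (2 * n)) =
      2 * (cos (2 * π * j * k / (2 * n)) * cos (2 * π * l * k / (2 * n))) := by
    push_cast
    rw [mul_add, mul_sub, add_mul, sub_mul, add_div, sub_div, cos_add, cos_sub]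
    ring
  unfold dctCoeff
  rw [hprod]
  split_ifs
  all_goals
    field_simp
    simp only [Real.sq_sqrt zero_le_two, Real.sq_sqrt (by positivity : (0 : ℝ) ≤ 2 * n)]
    ring

theorem sum_dctCoeff_mul_dctCoeff_eq_sum_range_two_mul {n : ℕ} (hn : 1 ≤ n) (j l : ℕ) :
    ∑ k ∈ range (n + 1), dctCoeff n j k * dctCoeff n l k =
      (∑ k ∈ range (2 * n), cos (2 * π * ((j + l : ℤ) : ℝ) * k / (2 * n)) +
        ∑ k ∈ range (2 * n), cos (2 * π * ((j - l : ℤ) : ℝ) * k / (2 * n))) / (2 * n) := by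
  set g : ℕ → ℝ := fun k => cos (2 * π * ((j + l : ℤ) : ℝ) * k / (2 * n)) +
    cos (2 * π * ((j - l : ℤ) : ℝ) * k / (2 * n))
  have hweighted : ∑ k ∈ range (n + 1), dctCoeff n j k * dctCoeff n l k =
      (g 0 + g n + 2 * ∑ k ∈ Icc 1 (n - 1), g k) / (2 * n) := by
    simp_rw [dctCoeff_mul_dctCoeff, sum_range_succ_eq_add_sum_Icc hn]
    rw [sum_congr rfl fun k hk => by rw [if_neg (by simp at hk; omega)], ← mul_sum]
    simp only [true_or, or_true, if_true]
    ring
  have hcircle : g 0 + g n + 2 * ∑ k ∈ Icc 1 (n - 1), g k = ∑ k ∈ range (2 * n), g k := by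
    refine (sum_range_two_mul_of_symm hn g fun k hk => ?_).symm
    simp only [g, cos_two_pi_int_mul_div_reflect _ hk]
  rw [hweighted, hcircle, sum_add_distrib]

theorem natCast_two_mul_dvd_sub_iff {n j l : ℕ} (hn : 1 ≤ n) (hj : j ≤ n) (hl : l ≤ n) :
    ((2 * n : ℕ) : ℤ) ∣ (j - l : ℤ) ↔ j = l := by
  refine ⟨fun h => ?_, fun h => by simp [h]⟩
  have := Int.eq_zero_of_abs_lt_dvd h (by rw [abs_lt]; omega)
  omega

theorem natCast_two_mul_dvd_add_iff {n j l : ℕ} (hj : j ≤ n) (hl : l ≤ n) :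
    ((2 * n : ℕ) : ℤ) ∣ (j + l : ℤ) ↔ j = l ∧ (j = 0 ∨ j = n) := by
  refine ⟨fun h => ?_, ?_⟩
  · rcases eq_or_ne (j + l : ℤ) (2 * n) with h2 | h2
    · omega
    · have := Int.eq_zero_of_dvd_of_nonneg_of_lt (by omega) (by omega) h
      omega
  · rintro ⟨rfl, rfl | rfl⟩ <;> simp [two_mul]

theorem sum_dctCoeff_mul_dctCoeff {n : ℕ} (hn : 1 ≤ n) {j l : ℕ} (hj : j ≤ n) (hl : l ≤ n) :
    ∑ k ∈ range (n + 1), dctCoeff n j k * dctCoeff n l k =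
      if j = l then (if j = 0 ∨ j = n then 2 else 1) else 0 := by
  have hroots (m : ℤ) : ∑ k ∈ range (2 * n), cos (2 * π * m * k / (2 * n)) =
      if ((2 * n : ℕ) : ℤ) ∣ m then (2 * n : ℝ) else 0 := by
    exact_mod_cast sum_range_cos_two_pi_int_mul_div (N := 2 * n) (by omega) m
  rw [sum_dctCoeff_mul_dctCoeff_eq_sum_range_two_mul hn, hroots, hroots]
  simp only [natCast_two_mul_dvd_add_iff hj hl, natCast_two_mul_dvd_sub_iff hn hj hl]
  by_cases hjl : j = l
  · subst hjl
    by_cases hend : j = 0 ∨ j = n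
    · simp only [hend, and_self, if_true]
      field_simp
      ring
    · simp only [hend, and_false, if_false, if_true, zero_add]
      exact div_self (by positivity)
  · simp only [hjl, false_and, if_false, add_zero, zero_div]

theorem sum_dctCoeff_mul {n : ℕ} (hn : 1 ≤ n) (j : ℕ) (g : ℕ → ℝ) :
    ∑ k ∈ range (n + 1), dctCoeff n j k * g k =
      1 / √(2 * n) * (√2 * g 0 + (-1) ^ j * √2 * g n +
        2 * ∑ k ∈ Icc 1 (n - 1), g k * cos (2 * π * j * k / (2 * n))) := by
  have hcos_n : cos (2 * π * j * n / (2 * n)) = (-1) ^ j := by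
    rw [show 2 * π * j * n / (2 * n) = j * π by field_simp, cos_nat_mul_pi]
  have hmid : ∑ k ∈ Icc 1 (n - 1), dctCoeff n j k * g k =
      1 / √(2 * n) * (2 * ∑ k ∈ Icc 1 (n - 1), g k * cos (2 * π * j * k / (2 * n))) := by
    rw [mul_sum, mul_sum]
    refine sum_congr rfl fun k hk => ?_
    rw [dctCoeff, if_neg (by simp at hk; omega)]
    ring
  rw [sum_range_succ_eq_add_sum_Icc hn, hmid]
  simp only [dctCoeff, true_or, or_true, if_true, Nat.cast_zero, mul_zero, zero_div, cos_zero,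
    hcos_n]
  ring

noncomputable def dctMatrix (n : ℕ) : Matrix (Fin (n + 1)) (Fin (n + 1)) ℝ :=
  of fun j k => dctCoeff n j k

theorem dctMatrix_mul_transpose {n : ℕ} (hn : 1 ≤ n) :
    dctMatrix n * (dctMatrix n)ᵀ =
      diagonal fun j : Fin (n + 1) =>
        ((if (j : ℕ) = 0 ∨ (j : ℕ) = n then 2 else 1 : ℝ≥0) : ℝ) := by
  ext j l
  rw [mul_apply, diagonal_apply]
  simp only [dctMatrix, transpose_apply, of_apply]
  rw [Fin.sum_univ_eq_sum_range (fun k => dctCoeff n j k * dctCoeff n l k),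
    sum_dctCoeff_mul_dctCoeff hn (Nat.lt_succ_iff.mp j.isLt) (Nat.lt_succ_iff.mp l.isLt)]
  simp only [Fin.val_inj]
  split_ifs <;> simp

theorem gaussian_circulant_eigenvalues_general
    {Ω : Type*} [MeasurableSpace Ω] (μ : Measure Ω)
    (n : ℕ) (hn : 1 ≤ n) (G : ℕ → Ω → ℝ)
    (hindep : iIndepFun (fun i : Fin (n + 1) => G i) μ)
    (hlaw : ∀ i ≤ n, Measure.map (G i) μ = gaussianReal 0 1)
    (d : ℕ → Ω → ℝ)
    (hd : ∀ j < 2 * n, d j = fun ω =>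
      (1 / Real.sqrt (2 * n)) *
        (Real.sqrt 2 * G 0 ω + (-1 : ℝ) ^ j * Real.sqrt 2 * G n ω
          + 2 * ∑ k ∈ Finset.Icc 1 (n - 1), G k ω * Real.cos (2 * π * j * k / (2 * n)))) :
    iIndepFun (fun j : Fin (n + 1) => d j) μ ∧
    (∀ j : ℕ, 0 < j → j < n → Measure.map (d j) μ = gaussianReal 0 1) ∧
    (∀ j : ℕ, j = 0 ∨ j = n → Measure.map (d j) μ = gaussianReal 0 2) := by
  have hdG (j : Fin (n + 1)) : d j = fun ω => (dctMatrix n *ᵥ fun k => G k ω) j := by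
    funext ω
    rw [hd j (by omega)]
    simp only [mulVec, dotProduct, dctMatrix, of_apply]
    rw [Fin.sum_univ_eq_sum_range (fun k => dctCoeff n j k * G k ω), sum_dctCoeff_mul hn]
  obtain ⟨hindep_d, hlaw_d⟩ := hindep.mulVec_of_mul_transpose_eq_diagonal
    (fun i => hlaw i (Nat.lt_succ_iff.mp i.isLt)) (dctMatrix_mul_transpose hn)
  refine ⟨by rwa [funext hdG], fun j hj0 hjn => ?_, fun j hj => ?_⟩
  · rw [show d j = _ from hdG ⟨j, by omega⟩]
    simpa [hj0.ne', hjn.ne] using hlaw_d ⟨j, by omega⟩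
  · rw [show d j = _ from hdG ⟨j, by omega⟩]
    simpa [hj] using hlaw_d ⟨j, by omega⟩

/-- The Gaussian case: if `G_0, …, G_n` are i.i.d. standard Gaussians and
`d_j = (2n)^{-1/2}[√2 G_0 + (−1)^j √2 G_n + 2 ∑_{k=1}^{n−1} G_k cos(2πjk/(2n))]`, then
`d_1, …, d_{n−1}` are i.i.d. standard Gaussians, and `d_0, d_n` are Gaussians with
variance `2`, the whole family `d_0, …, d_n` being independent. -/
theorem gaussian_circulant_eigenvalues
    {Ω : Type*} [MeasurableSpace Ω] (μ : Measure Ω) [IsProbabilityMeasure μ]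
    (n : ℕ) (hn : 1 ≤ n) (G : ℕ → Ω → ℝ)
    (hmeas : ∀ i, Measurable (G i))
    (hindep : iIndepFun (fun i : Fin (n + 1) => G i) μ)
    (hlaw : ∀ i ≤ n, Measure.map (G i) μ = gaussianReal 0 1)
    (d : ℕ → Ω → ℝ)
    (hd : ∀ j < 2 * n, d j = fun ω =>
      (1 / Real.sqrt (2 * n)) *
        (Real.sqrt 2 * G 0 ω + (-1 : ℝ) ^ j * Real.sqrt 2 * G n ω
          + 2 * ∑ k ∈ Finset.Icc 1 (n - 1), G k ω * Real.cos (2 * π * j * k / (2 * n)))) :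
    iIndepFun (fun j : Fin (n + 1) => d j) μ ∧
    (∀ j : ℕ, 0 < j → j < n → Measure.map (d j) μ = gaussianReal 0 1) ∧
    (∀ j : ℕ, j = 0 ∨ j = n → Measure.map (d j) μ = gaussianReal 0 2) :=
  gaussian_circulant_eigenvalues_general μ n hn G hindep hlaw d hd
end
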